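/- EIS property for dependence spaces: in a dependence space S, for any subsets P, Q, R of S, if P ∩ Q = ∅, P ∪ Q is independent, R is independent, and R ⊆ <Q>, then P ∪ R is independent. -/
import Mathlib


/-- A dependence space: a set `S` with a family `Δ` of finite subsets (each of
cardinality ≥ 2, the "directly dependent" sets) satisfying the transitivity axiom. -/
structure DependenceSpace (S : Type*) [DecidableEq S] where
  Δ : Set (Finset S)
  two_le : ∀ D ∈ Δ, 2 ≤ D.card
  trans : ∀ (x : S) (A B : Set S),
    (x ∈ A ∨ ∃ F : Finset S, ↑F ⊆ A ∧ x ∉ F ∧ insert x F ∈ Δ) →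
    (∀ a ∈ A, a ∈ B ∨ ∃ F : Finset S, ↑F ⊆ B ∧ a ∉ F ∧ insert a F ∈ Δ) →
    (x ∈ B ∨ ∃ F : Finset S, ↑F ⊆ B ∧ x ∉ F ∧ insert x F ∈ Δ)

/-- `x ~ ΣA`: `x` is dependent on `A`. -/
def DependenceSpace.depOn {S : Type*} [DecidableEq S] (D : DependenceSpace S) (x : S) (A : Set S) : Prop :=
  x ∈ A ∨ ∃ F : Finset S, ↑F ⊆ A ∧ x ∉ F ∧ insert x F ∈ D.Δ

/-- The span `<A>`: all elements dependent on `A`. -/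
def DependenceSpace.span {S : Type*} [DecidableEq S] (D : DependenceSpace S) (A : Set S) : Set S :=
  {x | D.depOn x A}

/-- A set is dependent if it contains a directly dependent finite subset. -/
def DependenceSpace.Dependent {S : Type*} [DecidableEq S] (D : DependenceSpace S) (A : Set S) : Prop :=
  ∃ F ∈ D.Δ, ↑F ⊆ A

def DependenceSpace.Independent {S : Type*} [DecidableEq S] (D : DependenceSpace S) (A : Set S) : Prop :=
  ¬ D.Dependent A

theorem eis_property {S : Type*} [DecidableEq S] (D : DependenceSpace S) (P Q R : Set S)
    (h7 : P ∩ Q = ∅) (h8 : D.Independent (P ∪ Q))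
    (h9 : D.Independent R) (h9' : R ⊆ D.span Q) :
    D.Independent (P ∪ R) := by
  rintro ⟨F, hFΔ, hFsub⟩
  have hx : ∃ x ∈ F, x ∈ P := by
    by_contra h
    push_neg at h
    exact h9 ⟨F, hFΔ, fun a ha => (hFsub ha).resolve_left (h a (by exact_mod_cast ha))⟩
  obtain ⟨x, hxF, hxP⟩ := hx
  set B : Set S := (P \ {x}) ∪ Q with hB
  have hdep : x ∈ (↑(F.erase x) : Set S) ∨
      ∃ G : Finset S, ↑G ⊆ (↑(F.erase x) : Set S) ∧ x ∉ G ∧ insert x G ∈ D.Δ :=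
    Or.inr ⟨F.erase x, subset_rfl, Finset.notMem_erase x F,
      by rwa [Finset.insert_erase hxF]⟩
  have hstep : ∀ a ∈ (↑(F.erase x) : Set S),
      a ∈ B ∨ ∃ G : Finset S, ↑G ⊆ B ∧ a ∉ G ∧ insert a G ∈ D.Δ := by
    intro a ha
    have haF : a ∈ F.erase x := ha
    have hane : a ≠ x := Finset.ne_of_mem_erase haF
    rcases hFsub (Finset.coe_subset.mpr (F.erase_subset x) ha) with haP | haR
    · exact Or.inl (Or.inl ⟨haP, by simpa using hane⟩)
    · rcases h9' haR with haQ | ⟨G, hG, haG, hGΔ⟩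
      · exact Or.inl (Or.inr haQ)
      · exact Or.inr ⟨G, fun y hy => Or.inr (hG hy), haG, hGΔ⟩
  rcases D.trans x (↑(F.erase x)) B hdep hstep with hxB | ⟨G, hG, hxG, hGΔ⟩
  · rcases hxB with ⟨_, hne⟩ | hxQ
    · exact hne rfl
    · have : x ∈ P ∩ Q := ⟨hxP, hxQ⟩
      simp [h7] at this
  · refine h8 ⟨insert x G, hGΔ, ?_⟩
    intro y hy
    rcases Finset.mem_coe.mp hy |> Finset.mem_insert.mp with rfl | hyG
    · exact Or.inl hxP
    · rcases hG hyG with ⟨hyP, _⟩ | hyQ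
      · exact Or.inl hyP
      · exact Or.inr hyQ
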